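/- Let n, n', x, x' be natural numbers with x ≤ n, x' ≤ n', and m := x + x' ≤ n ≤ n'. Then both one-tailed Fisher exact p-values satisfy P_L(x) ≥ C(n,m)/C(n+n',m) and P_R(x) ≥ C(n,m)/C(n+n',m); that is, the minimum attainable p-value ψ(m) = C(n,m)/C(n+n',m) is a lower bound on the p-value of any contingency table with margins m, n, n'. -/

import Mathlib

/-!
Both tails are bounded below by a single term of the hypergeometric distribution.
The right tail contains `q(m) = C(n,m)/C(n+n',m)` itself. The left tail contains `q(x)`, and
`C(n, x + x') ≤ C(n, x) C(n - x, x') ≤ C(n, x) C(n', x')`: choosing `x + x'` of `n` items is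
dominated by choosing `x` of them and then `x'` of the rest, and `n - x ≤ n'`.
-/

/-- The hypergeometric probability q(X) = C(n,X)·C(n',m−X) / C(n+n',m). -/
def hypergeomProb (n n' m X : ℕ) : ℚ :=
  (n.choose X * n'.choose (m - X) : ℚ) / ((n + n').choose m)

/-- Left-tail Fisher exact p-value: P_L(x) = Σ_{X=0}^{x} q(X). -/
def PLeft (n n' m x : ℕ) : ℚ :=
  ∑ X ∈ Finset.range (x + 1), hypergeomProb n n' m X

/-- Right-tail Fisher exact p-value: P_R(x) = Σ_{X=x}^{m} q(X). -/
def PRight (n n' m x : ℕ) : ℚ :=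
  ∑ X ∈ Finset.Icc x m, hypergeomProb n n' m X

theorem Nat.choose_add_le_choose_mul_choose_sub (n a b : ℕ) :
    n.choose (a + b) ≤ n.choose a * (n - a).choose b := by
  have h := Nat.choose_mul (n := n) (k := a + b) (s := a) (Nat.le_add_right a b)
  rw [Nat.add_sub_cancel_left] at h
  calc n.choose (a + b) ≤ n.choose (a + b) * (a + b).choose a :=
        Nat.le_mul_of_pos_right _ (Nat.choose_pos (Nat.le_add_right a b))
    _ = n.choose a * (n - a).choose b := h

section Hypergeometric

variable (n n' m : ℕ)

theorem hypergeomProb_nonneg (X : ℕ) : 0 ≤ hypergeomProb n n' m X := by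
  unfold hypergeomProb
  positivity

theorem hypergeomProb_self : hypergeomProb n n' m m = (n.choose m : ℚ) / (n + n').choose m := by
  simp [hypergeomProb]

theorem hypergeomProb_le_PLeft (x : ℕ) : hypergeomProb n n' m x ≤ PLeft n n' m x :=
  Finset.single_le_sum (fun X _ => hypergeomProb_nonneg n n' m X) (Finset.self_mem_range_succ x)

theorem hypergeomProb_le_PRight {x X : ℕ} (hxX : x ≤ X) (hXm : X ≤ m) :
    hypergeomProb n n' m X ≤ PRight n n' m x :=
  Finset.single_le_sum (fun X _ => hypergeomProb_nonneg n n' m X) (Finset.mem_Icc.2 ⟨hxX, hXm⟩)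

end Hypergeometric

theorem choose_div_choose_le_hypergeomProb {n n' : ℕ} (hnn' : n ≤ n') (x x' : ℕ) :
    (n.choose (x + x') : ℚ) / (n + n').choose (x + x') ≤ hypergeomProb n n' (x + x') x := by
  have hchoose : n.choose (x + x') ≤ n.choose x * n'.choose x' :=
    (Nat.choose_add_le_choose_mul_choose_sub n x x').trans
      (Nat.mul_le_mul_left _ (Nat.choose_le_choose _ ((Nat.sub_le n x).trans hnn')))
  rw [hypergeomProb, Nat.add_sub_cancel_left]
  gcongr
  exact_mod_cast hchoose

theorem min_pvalue_lower_bounds_tails_general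
    (n n' x x' : ℕ) (hnn' : n ≤ n') :
    (n.choose (x + x') : ℚ) / ((n + n').choose (x + x')) ≤
      PLeft n n' (x + x') x ∧
    (n.choose (x + x') : ℚ) / ((n + n').choose (x + x')) ≤
      PRight n n' (x + x') x := by
  constructor
  · exact (choose_div_choose_le_hypergeomProb hnn' x x').trans (hypergeomProb_le_PLeft ..)
  · rw [← hypergeomProb_self]
    exact hypergeomProb_le_PRight _ _ _ (Nat.le_add_right x x') le_rfl

theorem min_pvalue_lower_bounds_tails
    (n n' x x' : ℕ) (hx : x ≤ n) (hx' : x' ≤ n')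
    (hm : x + x' ≤ n) (hnn' : n ≤ n') :
    (n.choose (x + x') : ℚ) / ((n + n').choose (x + x')) ≤
      PLeft n n' (x + x') x ∧
    (n.choose (x + x') : ℚ) / ((n + n').choose (x + x')) ≤
      PRight n n' (x + x') x :=
  min_pvalue_lower_bounds_tails_general n n' x x' hnn'
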